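/- arXiv:1503.04678 — 3 statements merged into one kernel-verified Lean document; each statement's English description precedes it below -/
import Mathlib

section
/- For every integer n ≥ 2, the alternating sum ∑_{k=0}^{n} (-1)^k * C(n,k) / (n*k + n - 1) equals n^n * n! * ∏_{k=0}^{n} 1/(n*k + n - 1). -/
/-!
Partial fractions: when no `a k + b` vanishes,
`Sₙ(b) := ∑ₖ (-1)ᵏ C(n,k) / (a k + b) = n! aⁿ / ∏ₖ (a k + b)`.
Pascal's rule gives `Sₙ₊₁(b) = Sₙ(b) - Sₙ(b + a)`, and the two products on the right differ
only in their extreme factors `a (n+1) + b` and `b`, whose difference is `a (n+1)`.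
The theorem is the case `a = n`, `b = n - 1`.
-/

open Finset Nat

lemma sum_range_succ_neg_one_pow_mul_choose {R : Type*} [CommRing R] (n : ℕ) (f : ℕ → R) :
    ∑ k ∈ range (n + 2), (-1) ^ k * ((n + 1).choose k : R) * f k =
      ∑ k ∈ range (n + 1), (-1) ^ k * (n.choose k : R) * f k -
        ∑ k ∈ range (n + 1), (-1) ^ k * (n.choose k : R) * f (k + 1) := by
  have hshift : ∑ k ∈ range (n + 1), (-1) ^ k * (n.choose k : R) * f k =
      ∑ k ∈ range (n + 1), (-1) ^ (k + 1) * (n.choose (k + 1) : R) * f (k + 1) + f 0 := by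
    calc _ = ∑ k ∈ range (n + 2), (-1) ^ k * (n.choose k : R) * f k := by
          simp [sum_range_succ _ (n + 1)]
      _ = _ := by simp [sum_range_succ']
  have hpascal : ∀ k, (-1) ^ (k + 1) * ((n + 1).choose (k + 1) : R) * f (k + 1) =
      -((-1) ^ k * (n.choose k : R) * f (k + 1)) +
        (-1) ^ (k + 1) * (n.choose (k + 1) : R) * f (k + 1) := fun k ↦ by
    rw [choose_succ_succ, cast_add]
    ring
  rw [sum_range_succ', sum_congr rfl fun k _ ↦ hpascal k, sum_add_distrib, sum_neg_distrib, hshift]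
  simp
  ring

lemma prod_range_succ_mul_add {R : Type*} [CommSemiring R] (n : ℕ) (a b : R) :
    ∏ k ∈ range (n + 1), (a * k + b) = b * ∏ k ∈ range n, (a * k + (a + b)) := by
  rw [prod_range_succ', mul_comm]
  push_cast
  simp only [mul_add, mul_one, mul_zero, zero_add, add_assoc]

lemma sum_range_neg_one_pow_mul_choose_div {K : Type*} [Field K] (n : ℕ) (a b : K)
    (h : ∀ k ≤ n, a * k + b ≠ 0) :
    ∑ k ∈ range (n + 1), (-1) ^ k * (n.choose k : K) / (a * k + b) =
      n ! * a ^ n / ∏ k ∈ range (n + 1), (a * k + b) := by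
  induction n generalizing b with
  | zero => simp
  | succ n ih =>
    have hshift : ∀ k : ℕ, a * (k + 1 : ℕ) + b = a * k + (a + b) := fun k ↦ by
      push_cast
      ring
    have h₀ : ∀ k ≤ n, a * k + b ≠ 0 := fun k hk ↦ h k (by omega)
    have h₁ : ∀ k ≤ n, a * k + (a + b) ≠ 0 := fun k hk ↦ hshift k ▸ h (k + 1) (by omega)
    have hb : b ≠ 0 := by simpa using h 0 (n + 1).zero_le
    have hP := prod_ne_zero_iff.2 fun k hk ↦ h₀ k (Nat.lt_succ_iff.1 (mem_range.1 hk))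
    have hQ := prod_ne_zero_iff.2 fun k hk ↦ h₁ k (Nat.lt_succ_iff.1 (mem_range.1 hk))
    have hsplit := (prod_range_succ_mul_add (n + 1) a b).symm.trans (prod_range_succ _ (n + 1))
    have hsum := sum_range_succ_neg_one_pow_mul_choose n fun k ↦ 1 / (a * k + b)
    simp only [mul_one_div, hshift] at hsum
    rw [hsum, ih b h₀, ih (a + b) h₁, prod_range_succ_mul_add (n + 1), factorial_succ]
    generalize ∏ k ∈ range (n + 1), (a * k + b) = P at *
    generalize ∏ k ∈ range (n + 1), (a * k + (a + b)) = Q at *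
    push_cast at *
    field_simp
    linear_combination (n ! * a ^ n : K) * hsplit

theorem stmt_0 (n : ℕ) (hn : 2 ≤ n) :
    ∑ k ∈ Finset.range (n + 1),
      (-1 : ℝ) ^ k * (n.choose k) / (n * k + n - 1) =
    (n : ℝ) ^ n * n.factorial *
      ∏ k ∈ Finset.range (n + 1), (1 : ℝ) / (n * k + n - 1) := by
  have hn₁ : (1 : ℝ) ≤ n - 1 := by
    have : (2 : ℝ) ≤ n := by exact_mod_cast hn
    linarith
  have hden : ∀ k ≤ n, (n : ℝ) * k + (n - 1) ≠ 0 := fun k _ ↦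
    (add_pos_of_nonneg_of_pos (by positivity) (by linarith)).ne'
  simp only [add_sub_assoc, prod_div_distrib, prod_const_one,
    sum_range_neg_one_pow_mul_choose_div n _ _ hden]
  ring
end

section
/- For every integer n ≥ 2, ∑_{k=0}^{n} (-1)^k * C(n,k) / (n*k + n - 1) = n^n * n! / ∏_{k=1}^{n+1} (n*k - 1). -/
/-!
The sum `∑ (-1)^k C(n,k) / (x + k)` is, up to the sign `(-1)^n`, the `n`-th forward difference
of `x ↦ 1/x`, and induction on `n` gives `Δⁿ(1/x) = (-1)^n n! / (x (x+1) ⋯ (x+n))`.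
Writing `n k + n - 1 = n (x + k)` with `x = (n - 1)/n` turns the theorem into this identity.
-/

open Finset
open scoped fwdDiff

variable {K : Type*} [Field K]

theorem prod_range_succ_add_eq_mul_prod_add_one (n : ℕ) (x : K) :
    ∏ j ∈ range (n + 1), (x + j) = x * ∏ j ∈ range n, (x + 1 + j) := by
  rw [prod_range_succ', mul_comm]
  push_cast
  rw [add_zero]
  congr 1
  exact prod_congr rfl fun j _ => by ring

theorem fwdDiff_iter_inv_apply (n : ℕ) (x : K) (hx : ∀ j ≤ n, x + j ≠ 0) :
    Δ_[1] ^[n] (·⁻¹) x = (-1) ^ n * n.factorial / ∏ j ∈ range (n + 1), (x + j) := by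
  induction n generalizing x with
  | zero => simp
  | succ n ih =>
    have hx' : ∀ j ≤ n, x + 1 + j ≠ 0 := fun j hj => by
      convert hx (j + 1) (by omega) using 1; push_cast; ring
    have hP : ∏ j ∈ range (n + 1), (x + j) ≠ 0 :=
      prod_ne_zero_iff.2 fun j hj => hx j (by grind)
    have hQ : ∏ j ∈ range (n + 1), (x + 1 + j) ≠ 0 :=
      prod_ne_zero_iff.2 fun j hj => hx' j (by grind)
    have hxn : x + (n + 1 : ℕ) ≠ 0 := hx (n + 1) le_rfl
    have hPQ := prod_range_succ_add_eq_mul_prod_add_one (n + 1) x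
    rw [Function.iterate_succ_apply', fwdDiff, ih x fun j hj => hx j (by omega), ih (x + 1) hx',
      prod_range_succ (fun j : ℕ => x + j) (n + 1)]
    rw [prod_range_succ (fun j : ℕ => x + j) (n + 1)] at hPQ
    generalize ∏ j ∈ range (n + 1), (x + j) = P at *
    generalize ∏ j ∈ range (n + 1), (x + 1 + j) = Q at *
    push_cast [Nat.factorial_succ] at hxn hPQ ⊢
    field_simp
    linear_combination (-1) ^ n * (n.factorial : K) * hPQ

theorem sum_range_alternating_choose_div_add (n : ℕ) (x : K) (hx : ∀ j ≤ n, x + j ≠ 0) :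
    ∑ k ∈ range (n + 1), (-1) ^ k * (n.choose k : K) / (x + k) =
      n.factorial / ∏ j ∈ range (n + 1), (x + j) := by
  have hsq (i : ℕ) : (-1 : K) ^ i * (-1) ^ i = 1 := by
    rw [← mul_pow, neg_one_mul, neg_neg, one_pow]
  refine mul_left_cancel₀ (pow_ne_zero n (neg_ne_zero.2 (one_ne_zero (α := K)))) ?_
  rw [← mul_div_assoc, ← fwdDiff_iter_inv_apply n x hx, fwdDiff_iter_eq_sum_shift, mul_sum]
  refine sum_congr rfl fun k hk => ?_
  obtain ⟨m, rfl⟩ := Nat.exists_eq_add_of_le (mem_range_succ_iff.1 hk)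
  rw [Nat.add_sub_cancel_left, zsmul_eq_mul, nsmul_one, pow_add]
  push_cast
  linear_combination (-1) ^ m * ((k + m).choose k : K) / (x + k) * hsq k

theorem sum_range_alternating_choose_div_mul_add (n : ℕ) {a : K} (b : K) (ha : a ≠ 0)
    (hab : ∀ j ≤ n, a * j + b ≠ 0) :
    ∑ k ∈ range (n + 1), (-1) ^ k * (n.choose k : K) / (a * k + b) =
      a ^ n * n.factorial / ∏ j ∈ range (n + 1), (a * j + b) := by
  have hscale (j : ℕ) : a * j + b = a * (b / a + j) := by field_simp; ring
  have hx (j : ℕ) (hj : j ≤ n) : b / a + j ≠ 0 := right_ne_zero_of_mul (hscale j ▸ hab j hj)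
  simp_rw [hscale, prod_mul_distrib, prod_const, card_range, div_mul_eq_div_div_swap, ← sum_div,
    sum_range_alternating_choose_div_add n _ hx]
  field_simp
  ring

theorem stmt_5 (n : ℕ) (hn : 2 ≤ n) :
    ∑ k ∈ Finset.range (n + 1),
      (-1 : ℝ) ^ k * (n.choose k) / (n * k + n - 1) =
    (n : ℝ) ^ n * n.factorial / ∏ k ∈ Finset.Icc 1 (n + 1), ((n : ℝ) * k - 1) := by
  have hn' : (2 : ℝ) ≤ n := by exact_mod_cast hn
  have hpos (j : ℕ) : (0 : ℝ) < n * j + (n - 1) := by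
    have : (0 : ℝ) ≤ n * j := by positivity
    linarith
  have hreindex : ∏ k ∈ Finset.Icc 1 (n + 1), ((n : ℝ) * k - 1) =
      ∏ j ∈ range (n + 1), ((n : ℝ) * j + (n - 1)) := by
    rw [← Ico_add_one_right_eq_Icc, prod_Ico_eq_prod_range]
    refine prod_congr rfl fun j _ => ?_
    push_cast
    ring
  simp_rw [add_sub_assoc, hreindex]
  exact sum_range_alternating_choose_div_mul_add n _ (by positivity) fun j _ => (hpos j).ne'
end

section
/- Let n be a natural number and let b, c be real numbers with b ≠ 0 and b*k + c ≠ 0 for all integers 0 ≤ k ≤ n. Then ∑_{k=0}^{n} (-1)^k * C(n,k) / (b*k + c) = b^n * n! * ∏_{k=0}^{n} 1/(b*k + c). -/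
theorem aux_pf (b : ℝ) (hb : b ≠ 0) : ∀ n : ℕ, ∀ c : ℝ,
    (∀ k : ℕ, k ≤ n → b * k + c ≠ 0) →
    ∑ k ∈ Finset.range (n + 1),
      (-1 : ℝ) ^ k * (n.choose k) / (b * k + c) =
    b ^ n * n.factorial * ∏ k ∈ Finset.range (n + 1), (1 : ℝ) / (b * k + c) := by
  intro n
  induction n with
  | zero => intro c h; simp
  | succ n ih =>
    intro c h
    have hc : ∀ k : ℕ, k ≤ n → b * k + c ≠ 0 := fun k hk => h k (hk.trans (Nat.le_succ n))
    have hcb : ∀ k : ℕ, k ≤ n → b * k + (c + b) ≠ 0 := by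
      intro k hk
      have h2 := h (k + 1) (by omega)
      intro hcon
      exact h2 (by push_cast; linear_combination hcon)
    have hc0 : c ≠ 0 := by have := h 0 (Nat.zero_le _); simpa using this
    have hcn : b * (n + 1 : ℝ) + c ≠ 0 := by
      have := h (n + 1) le_rfl; push_cast at this; exact this
    -- LHS manipulation
    rw [Finset.sum_range_succ']
    have term : ∀ i ∈ Finset.range (n + 1),
        (-1 : ℝ) ^ (i + 1) * ((n + 1).choose (i + 1) : ℝ) / (b * (i + 1 : ℕ) + c) =
        -((-1 : ℝ) ^ i * (n.choose i : ℝ) / (b * i + (c + b))) +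
          (-1 : ℝ) ^ (i + 1) * (n.choose (i + 1) : ℝ) / (b * (i + 1 : ℕ) + c) := by
      intro i hi
      have hi' := Finset.mem_range.mp hi
      rw [Nat.choose_succ_succ]
      push_cast
      have hd : b * (i : ℝ) + (c + b) ≠ 0 := hcb i (by omega)
      rw [show b * ((i : ℝ) + 1) + c = b * i + (c + b) by ring]
      field_simp
      ring
    rw [Finset.sum_congr rfl term, Finset.sum_add_distrib]
    have e1 : ∑ i ∈ Finset.range (n + 1),
        -((-1 : ℝ) ^ i * (n.choose i : ℝ) / (b * i + (c + b))) =
        -(b ^ n * n.factorial * ∏ k ∈ Finset.range (n + 1), (1 : ℝ) / (b * k + (c + b))) := by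
      rw [Finset.sum_neg_distrib, ih (c + b) hcb]
    have e2 : (∑ i ∈ Finset.range (n + 1),
        (-1 : ℝ) ^ (i + 1) * (n.choose (i + 1) : ℝ) / (b * (i + 1 : ℕ) + c)) +
        (-1 : ℝ) ^ 0 * ((n + 1).choose 0 : ℝ) / (b * (0 : ℕ) + c) =
        b ^ n * n.factorial * ∏ k ∈ Finset.range (n + 1), (1 : ℝ) / (b * k + c) := by
      have : (∑ i ∈ Finset.range (n + 1),
          (-1 : ℝ) ^ (i + 1) * (n.choose (i + 1) : ℝ) / (b * (i + 1 : ℕ) + c)) +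
          (-1 : ℝ) ^ 0 * ((n + 1).choose 0 : ℝ) / (b * (0 : ℕ) + c) =
          ∑ k ∈ Finset.range (n + 2),
            (-1 : ℝ) ^ k * (n.choose k : ℝ) / (b * k + c) := by
        conv_rhs => rw [Finset.sum_range_succ']
        norm_num
      rw [this, Finset.sum_range_succ, Nat.choose_succ_self]
      simp [ih c hc]
    rw [e1, add_assoc, e2]
    -- RHS algebra
    set P : ℝ := ∏ k ∈ Finset.range (n + 2), (1 : ℝ) / (b * k + c) with hP
    have hstep : P = (∏ k ∈ Finset.range (n + 1), (1 : ℝ) / (b * k + c)) * (1 / (b * (n + 1) + c)) := by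
      rw [hP, Finset.prod_range_succ]; push_cast; ring
    have hP1 : ∏ k ∈ Finset.range (n + 1), (1 : ℝ) / (b * k + c) = P * (b * (n + 1) + c) := by
      rw [hstep, mul_assoc, one_div_mul_cancel hcn, mul_one]
    have hP2 : ∏ k ∈ Finset.range (n + 1), (1 : ℝ) / (b * k + (c + b)) = P * c := by
      have hQ : ∏ k ∈ Finset.range (n + 1), (1 : ℝ) / (b * k + (c + b)) =
          ∏ k ∈ Finset.range (n + 1), (1 : ℝ) / (b * (k + 1 : ℕ) + c) := by
        apply Finset.prod_congr rfl
        intro k _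
        push_cast
        ring_nf
      have hstep2 : P = (∏ k ∈ Finset.range (n + 1), (1 : ℝ) / (b * (k + 1 : ℕ) + c)) * (1 / c) := by
        rw [hP, Finset.prod_range_succ']; norm_num
      rw [hQ, hstep2, mul_assoc, one_div_mul_cancel hc0, mul_one]
    rw [hP1, hP2, Nat.factorial_succ]
    push_cast
    ring

theorem stmt_9 (n : ℕ) (b c : ℝ) (hb : b ≠ 0)
    (h : ∀ k : ℕ, k ≤ n → b * k + c ≠ 0) :
    ∑ k ∈ Finset.range (n + 1),
      (-1 : ℝ) ^ k * (n.choose k) / (b * k + c) =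
    b ^ n * n.factorial * ∏ k ∈ Finset.range (n + 1), (1 : ℝ) / (b * k + c) := by
  exact aux_pf b hb n c h
end
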